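/- arXiv:2504.13173 — 3 statements merged into one kernel-verified Lean document; each statement's English description precedes it below -/
import Mathlib

section
/- Fix δ > 0, k ∈ ℝᵈ, v ∈ ℝᵐ, and let H be the Huber function with parameter δ. Then the norm-based Huber attentional bias ℓ(W) := H(‖Wk − v‖₂) is differentiable on all of ℝ^{m×d}, with gradient (with respect to the Frobenius inner product) equal to (Wk − v) kᵀ when ‖Wk − v‖₂ ≤ δ, and equal to δ · ((Wk − v)/‖Wk − v‖₂) kᵀ when ‖Wk − v‖₂ > δ. -/
/-!
The loss is `y ↦ H ‖y‖` composed with the affine map `W ↦ W k - v`, so its gradient is the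
adjoint of `W ↦ W k` (which sends `g` to `g kᵀ`) applied to the gradient of `y ↦ H ‖y‖`.
On `(0, ∞)` the Huber function has derivative `min a δ`, its two pieces agreeing to first order
at `δ`; the chain rule through `‖·‖` then gives `min ‖y‖ δ • y / ‖y‖` for `y ≠ 0`, while near
`y = 0` the function is `‖y‖² / 2`, whose gradient at `0` vanishes.
-/

open scoped InnerProduct

noncomputable def huber (δ a : ℝ) : ℝ :=
  if |a| ≤ δ then a ^ 2 / 2 else δ * (|a| - δ / 2)

section Huber

variable {δ : ℝ}

theorem huber_of_abs_le {a : ℝ} (ha : |a| ≤ δ) : huber δ a = a ^ 2 / 2 :=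
  if_pos ha

theorem huber_of_le (hδ : 0 < δ) {a : ℝ} (ha : δ ≤ a) : huber δ a = δ * (a - δ / 2) := by
  rw [huber, abs_of_pos (hδ.trans_le ha)]
  split_ifs with h
  · rw [le_antisymm h ha]
    ring
  · rfl

theorem huber_hasDerivAt (hδ : 0 < δ) {a : ℝ} (ha : 0 < a) :
    HasDerivAt (huber δ) (min a δ) a := by
  have hquad : ∀ x, HasDerivAt (fun y : ℝ => y ^ 2 / 2) x x := fun x => by
    simpa using (hasDerivAt_pow 2 x).div_const 2
  have hlin : ∀ x, HasDerivAt (fun y : ℝ => δ * (y - δ / 2)) δ x := fun x => by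
    simpa using ((hasDerivAt_id x).sub_const (δ / 2)).const_mul δ
  rcases lt_trichotomy a δ with h | rfl | h
  · rw [min_eq_left h.le]
    refine (hquad a).congr_of_eventuallyEq ?_
    filter_upwards [Ioo_mem_nhds (by linarith : -a < a) h] with x hx
    exact huber_of_abs_le (abs_le.mpr ⟨by linarith [hx.1], hx.2.le⟩)
  · rw [min_self]
    have hleft : HasDerivWithinAt (huber a) a (Set.Iic a) a := by
      refine (hquad a).hasDerivWithinAt.congr_of_eventuallyEq ?_
        (huber_of_abs_le (abs_of_pos ha).le)
      filter_upwards [Icc_mem_nhdsLE (by linarith : -a < a)] with x hx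
      exact huber_of_abs_le (abs_le.mpr hx)
    have hright : HasDerivWithinAt (huber a) a (Set.Ici a) a :=
      (hlin a).hasDerivWithinAt.congr (fun x hx => huber_of_le ha hx) (huber_of_le ha le_rfl)
    simpa [Set.Iic_union_Ici] using hleft.union hright
  · rw [min_eq_right h.le]
    refine (hlin a).congr_of_eventuallyEq ?_
    filter_upwards [Ioi_mem_nhds h] with x hx
    exact huber_of_le hδ hx.le

end Huber

section Gradient

variable {E F : Type*} [NormedAddCommGroup E] [InnerProductSpace ℝ E] [CompleteSpace E]
  [NormedAddCommGroup F] [InnerProductSpace ℝ F] [CompleteSpace F]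

theorem HasDerivAt.comp_hasGradientAt {φ : ℝ → ℝ} {φ' : ℝ} {f : E → ℝ} {g x : E}
    (hφ : HasDerivAt φ φ' (f x)) (hf : HasGradientAt f g x) :
    HasGradientAt (fun y => φ (f y)) (φ' • g) x := by
  rw [hasGradientAt_iff_hasFDerivAt, map_smul] at *
  exact hφ.comp_hasFDerivAt x hf

theorem hasGradientAt_half_norm_sq (x : E) : HasGradientAt (fun y : E => ‖y‖ ^ 2 / 2) x x := by
  rw [hasGradientAt_iff_hasFDerivAt]
  have h := (hasStrictFDerivAt_norm_sq x).hasFDerivAt.mul_const (1 / 2 : ℝ)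
  simp only [mul_one_div] at h
  refine h.congr_fderiv ?_
  ext y
  simp

theorem hasGradientAt_norm {x : E} (hx : x ≠ 0) :
    HasGradientAt (fun y : E => ‖y‖) (‖x‖⁻¹ • x) x := by
  have hsqrt : HasDerivAt (fun t => Real.sqrt (2 * t)) ‖x‖⁻¹ (‖x‖ ^ 2 / 2) := by
    have h2 : (2 : ℝ) * (‖x‖ ^ 2 / 2) = ‖x‖ ^ 2 := by ring
    convert ((hasDerivAt_id _).const_mul 2).sqrt (by rw [id_eq, h2]; positivity) using 1
    · rfl
    · rw [id_eq, h2, Real.sqrt_sq (norm_nonneg x)]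
      field_simp
  convert HasDerivAt.comp_hasGradientAt (f := fun y : E => ‖y‖ ^ 2 / 2) hsqrt
    (hasGradientAt_half_norm_sq x) using 2 with y
  rw [mul_div_cancel₀ _ two_ne_zero, Real.sqrt_sq (norm_nonneg y)]

theorem HasGradientAt.comp_clm_sub {f : F → ℝ} {g : F} (A : E →L[ℝ] F) (c : F) {x : E}
    (hf : HasGradientAt f g (A x - c)) :
    HasGradientAt (fun y => f (A y - c)) ((A†) g) x := by
  rw [hasGradientAt_iff_hasFDerivAt] at hf ⊢
  refine (hf.comp x (A.hasFDerivAt.sub_const c)).congr_fderiv ?_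
  ext y
  simp [ContinuousLinearMap.adjoint_inner_left]

theorem hasGradientAt_huber_norm {δ : ℝ} (hδ : 0 < δ) (x : E) :
    HasGradientAt (fun y => huber δ ‖y‖) (if ‖x‖ ≤ δ then x else (δ / ‖x‖) • x) x := by
  rcases eq_or_ne x 0 with rfl | hx
  · rw [norm_zero, if_pos hδ.le]
    refine (hasGradientAt_half_norm_sq 0).congr_of_eventuallyEq ?_
    filter_upwards [Metric.ball_mem_nhds 0 hδ] with y hy
    rw [huber_of_abs_le ((abs_norm y).trans_le (mem_ball_zero_iff.mp hy).le)]
  · convert HasDerivAt.comp_hasGradientAt (f := fun y : E => ‖y‖)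
      (huber_hasDerivAt hδ (norm_pos_iff.mpr hx)) (hasGradientAt_norm hx) using 1
    have hx' : ‖x‖ ≠ 0 := norm_ne_zero_iff.mpr hx
    split_ifs with h
    · rw [min_eq_left h, smul_smul, mul_inv_cancel₀ hx', one_smul]
    · rw [min_eq_right (le_of_not_ge h), smul_smul, div_eq_mul_inv]

end Gradient

section MulVec

variable {m d : ℕ}

noncomputable def mulVecCLM (k : Fin d → ℝ) :
    EuclideanSpace ℝ (Fin m × Fin d) →L[ℝ] EuclideanSpace ℝ (Fin m) :=
  LinearMap.toContinuousLinearMap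
    { toFun := fun W => WithLp.toLp 2 fun i => ∑ j, W (i, j) * k j
      map_add' := fun W W' => by
        ext i
        simp [add_mul, Finset.sum_add_distrib]
      map_smul' := fun c W => by
        ext i
        simp [Finset.mul_sum, mul_assoc] }

@[simp]
theorem mulVecCLM_apply (k : Fin d → ℝ) (W : EuclideanSpace ℝ (Fin m × Fin d)) (i : Fin m) :
    mulVecCLM k W i = ∑ j, W (i, j) * k j :=
  rfl

theorem adjoint_mulVecCLM_apply (k : Fin d → ℝ) (g : EuclideanSpace ℝ (Fin m)) :
    ((mulVecCLM k)†) g = WithLp.toLp 2 fun p => g p.1 * k p.2 := by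
  refine ext_inner_right ℝ fun W => ?_
  rw [ContinuousLinearMap.adjoint_inner_left]
  simp [PiLp.inner_apply, Fintype.sum_prod_type, Finset.mul_sum, mul_comm, mul_left_comm,
    mul_assoc]

end MulVec

/-- The norm-based Huber attentional bias `ℓ(W) = H(‖Wk − v‖₂)` (with Huber
parameter `δ > 0`) is differentiable on all of `ℝ^{m×d}`, with gradient
(w.r.t. the Frobenius inner product, i.e. the inner product of
`EuclideanSpace ℝ (Fin m × Fin d)`) equal to `(Wk − v)kᵀ` when `‖Wk − v‖₂ ≤ δ`
and to `δ·((Wk − v)/‖Wk − v‖₂)kᵀ` when `‖Wk − v‖₂ > δ`.  Here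
`‖Wk − v‖₂ = √(∑ᵢ ((Wk − v)ᵢ)²)` and `rᵢ = (Wk − v)ᵢ = ∑ⱼ W i j * k j − v i`. -/
theorem stmt_11 {m d : ℕ} (δ : ℝ) (hδ : 0 < δ) (H : ℝ → ℝ)
    (hH : ∀ a, H a = if |a| ≤ δ then a ^ 2 / 2 else δ * (|a| - δ / 2))
    (k : Fin d → ℝ) (v : Fin m → ℝ) :
    ∀ (W G : EuclideanSpace ℝ (Fin m × Fin d)) (r : Fin m → ℝ),
      (∀ i, r i = (∑ j, W (i, j) * k j) - v i) →
      (∀ i j, G (i, j) =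
        if Real.sqrt (∑ i', r i' ^ 2) ≤ δ then r i * k j
        else δ * (r i / Real.sqrt (∑ i', r i' ^ 2)) * k j) →
      HasGradientAt
        (fun W' : EuclideanSpace ℝ (Fin m × Fin d) =>
          H (Real.sqrt (∑ i, ((∑ j, W' (i, j) * k j) - v i) ^ 2))) G W := by
  intro W G r hr hG
  obtain rfl : H = huber δ := funext hH
  set R := mulVecCLM k W - WithLp.toLp 2 v
  have hR : ∀ i, R i = r i := fun i => by simp [R, hr]
  have hRnorm : Real.sqrt (∑ i, r i ^ 2) = ‖R‖ := by
    simp [EuclideanSpace.norm_eq, ← hR]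
  have hnorm : ∀ W' : EuclideanSpace ℝ (Fin m × Fin d),
      Real.sqrt (∑ i, ((∑ j, W' (i, j) * k j) - v i) ^ 2) =
        ‖mulVecCLM k W' - WithLp.toLp 2 v‖ := fun W' => by
    simp [EuclideanSpace.norm_eq]
  simp only [hnorm]
  convert (hasGradientAt_huber_norm hδ R).comp_clm_sub (mulVecCLM k) (WithLp.toLp 2 v)
  rw [adjoint_mulVecCLM_apply]
  ext ⟨i, j⟩
  rw [hG, hRnorm, WithLp.ofLp_toLp]
  split_ifs
  · rw [hR]
  · rw [PiLp.smul_apply, smul_eq_mul, hR]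
    ring
end

section
/- Let n ≥ 1, G ∈ ℝⁿ, c > 0, η > 0, α > 0, and let w′ ∈ ℝⁿ have strictly positive components. Set λ = (1/α)/((1/α) + (1/η)) ∈ (0,1) and η′ = 1/((1/α) + (1/η)) > 0. Consider the scaled probability simplex Δ_c = {w ∈ ℝⁿ : w_j ≥ 0, Σ_j w_j = c} and the objective f(w) = ⟨G, w⟩ + (1/η) Σ_j w_j log(w_j / w′_j) + (1/α) Σ_j w_j log w_j (with the convention 0·log 0 = 0 and 0·log(0/w′_j) = 0). Then f attains a unique minimum on Δ_c at w* = c · Softmax((1−λ) log w′ − η′ G), i.e., w*_j = c · exp((1−λ) log w′_j − η′ G_j) / Σ_k exp((1−λ) log w′_k − η′ G_k). -/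
lemma klpt_lt {t x : ℝ} (ht : 0 < t) (hx : 0 ≤ x) (hxt : x ≠ t) :
    x - t < x * Real.log x - x * Real.log t := by
  rcases hx.eq_or_lt with h | hx'
  · simp [← h]; linarith
  · have h1 : Real.log (t / x) < t / x - 1 :=
      Real.log_lt_sub_one_of_pos (div_pos ht hx') (by
        intro h
        exact hxt ((div_eq_one_iff_eq hx'.ne').mp h).symm)
    rw [Real.log_div ht.ne' hx'.ne'] at h1
    have h2 : x * (Real.log t - Real.log x) < x * (t / x - 1) :=
      mul_lt_mul_of_pos_left h1 hx'
    have h3 : x * (t / x - 1) = t - x := by field_simp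
    nlinarith [h2]

lemma klpt_le {t x : ℝ} (ht : 0 < t) (hx : 0 ≤ x) :
    x - t ≤ x * Real.log x - x * Real.log t := by
  rcases eq_or_ne x t with h | h
  · subst h; simp
  · exact (klpt_lt ht hx h).le

/-- The Memora update: minimization over the scaled probability simplex of the
linearized attentional bias plus KL local retention from the previous state `w′`
plus Shannon-entropy global retention.  With `λ = (1/α)/((1/α)+(1/η))` and
`η′ = 1/((1/α)+(1/η))`, the objective
`f(w) = ⟨G, w⟩ + (1/η)∑ⱼ wⱼ log(wⱼ/w′ⱼ) + (1/α)∑ⱼ wⱼ log wⱼ` attains a unique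
minimum on `Δ_c` at `w* = c · Softmax((1−λ)log w′ − η′G)`.  (In Mathlib
`Real.log 0 = 0`, which realizes the conventions `0·log 0 = 0` and
`0·log(0/w′ⱼ) = 0`.) -/
theorem stmt_15 {n : ℕ} (hn : 1 ≤ n) (G : Fin n → ℝ) (c η α : ℝ)
    (hc : 0 < c) (hη : 0 < η) (hα : 0 < α)
    (w' : Fin n → ℝ) (hw' : ∀ j, 0 < w' j)
    (lam η' : ℝ)
    (hlam : lam = (1 / α) / ((1 / α) + (1 / η)))
    (hη' : η' = 1 / ((1 / α) + (1 / η)))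
    (wstar : Fin n → ℝ)
    (hws : ∀ j, wstar j =
      c * Real.exp ((1 - lam) * Real.log (w' j) - η' * G j) /
        ∑ l, Real.exp ((1 - lam) * Real.log (w' l) - η' * G l)) :
    ((∀ j, 0 ≤ wstar j) ∧ (∑ j, wstar j) = c) ∧
    (∀ w : Fin n → ℝ, (∀ j, 0 ≤ w j) → (∑ j, w j) = c → w ≠ wstar →
      (∑ j, G j * wstar j) + (1 / η) * (∑ j, wstar j * Real.log (wstar j / w' j))
          + (1 / α) * (∑ j, wstar j * Real.log (wstar j)) <
        (∑ j, G j * w j) + (1 / η) * (∑ j, w j * Real.log (w j / w' j))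
          + (1 / α) * (∑ j, w j * Real.log (w j))) := by
  have hnem : Nonempty (Fin n) := Fin.pos_iff_nonempty.mp hn
  set β : ℝ := (1 / α) + (1 / η) with hβdef
  have hβ : 0 < β := by positivity
  set a : Fin n → ℝ := fun j => (1 - lam) * Real.log (w' j) - η' * G j with ha
  have hws' : ∀ j, wstar j = c * Real.exp (a j) / ∑ l, Real.exp (a l) := by
    simpa [ha] using hws
  set S : ℝ := ∑ l, Real.exp (a l) with hS
  have hSpos : 0 < S := Finset.sum_pos (fun l _ => Real.exp_pos _) Finset.univ_nonempty
  have hwspos : ∀ j, 0 < wstar j := fun j => by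
    rw [hws' j]; exact div_pos (mul_pos hc (Real.exp_pos _)) hSpos
  have hsumws : (∑ j, wstar j) = c := by
    have h1 : (∑ j, wstar j) = c * S / S := by
      rw [Finset.sum_congr rfl (fun j _ => hws' j), ← Finset.sum_div, ← Finset.mul_sum]
    rw [h1, mul_div_assoc, div_self hSpos.ne', mul_one]
  refine ⟨⟨fun j => (hwspos j).le, hsumws⟩, ?_⟩
  intro w hw hsum hne
  have hlogws : ∀ j, Real.log (wstar j) = Real.log c + a j - Real.log S := by
    intro j
    rw [hws' j, Real.log_div (by positivity) hSpos.ne',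
      Real.log_mul hc.ne' (Real.exp_pos _).ne', Real.log_exp]
  have hβa : ∀ j, β * a j = (1 / η) * Real.log (w' j) - G j := by
    intro j
    simp only [ha, hβdef, hlam, hη']
    have h1 : (1 / α) + (1 / η) ≠ 0 := by positivity
    field_simp
    ring
  have hpt : ∀ (j : Fin n) (x : ℝ), 0 ≤ x →
      G j * x + (1 / η) * (x * Real.log (x / w' j)) + (1 / α) * (x * Real.log x)
        = β * (x * Real.log x - x * Real.log (wstar j))
          + β * (Real.log c - Real.log S) * x := by
    intro j x hx
    have hdiv : x * Real.log (x / w' j) = x * (Real.log x - Real.log (w' j)) := by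
      rcases eq_or_ne x 0 with h | h
      · simp [h]
      · rw [Real.log_div h (hw' j).ne']
    rw [hdiv, hlogws j]
    have h2 := hβa j
    nlinarith [h2]
  have hF : ∀ v : Fin n → ℝ, (∀ j, 0 ≤ v j) → (∑ j, v j) = c →
      (∑ j, G j * v j) + (1 / η) * (∑ j, v j * Real.log (v j / w' j))
          + (1 / α) * (∑ j, v j * Real.log (v j))
        = β * (∑ j, (v j * Real.log (v j) - v j * Real.log (wstar j)))
          + β * (Real.log c - Real.log S) * c := by
    intro v hv hvs
    have h1 : (∑ j, G j * v j) + (1 / η) * (∑ j, v j * Real.log (v j / w' j))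
          + (1 / α) * (∑ j, v j * Real.log (v j))
        = ∑ j, (G j * v j + (1 / η) * (v j * Real.log (v j / w' j))
            + (1 / α) * (v j * Real.log (v j))) := by
      rw [Finset.sum_add_distrib, Finset.sum_add_distrib, Finset.mul_sum, Finset.mul_sum]
    rw [h1, Finset.sum_congr rfl (fun j _ => hpt j (v j) (hv j)),
      Finset.sum_add_distrib, ← Finset.mul_sum, ← Finset.mul_sum, hvs]
  have hKL : 0 < ∑ j, (w j * Real.log (w j) - w j * Real.log (wstar j)) := by
    obtain ⟨j0, hj0⟩ : ∃ j, w j ≠ wstar j := by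
      by_contra h
      push_neg at h
      exact hne (funext h)
    have h0 : (∑ j, (w j - wstar j)) = 0 := by
      rw [Finset.sum_sub_distrib, hsum, hsumws]; ring
    have hlt : (∑ j, (w j - wstar j))
        < ∑ j, (w j * Real.log (w j) - w j * Real.log (wstar j)) :=
      Finset.sum_lt_sum (fun j _ => klpt_le (hwspos j) (hw j))
        ⟨j0, Finset.mem_univ _, klpt_lt (hwspos j0) (hw j0) hj0⟩
    linarith
  have hzero : (∑ j, (wstar j * Real.log (wstar j) - wstar j * Real.log (wstar j))) = 0 := by
    simp
  rw [hF w hw hsum, hF wstar (fun j => (hwspos j).le) hsumws, hzero]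
  nlinarith [mul_pos hβ hKL]
end

section
/- Let g, w₀ ∈ ℝ and η, β, α > 0. Set γ = ηβ/(α(η+β)), λ = β/(β+η), and ζ = ηλ. Then the function w ↦ g·(w − w₀) + (1/(2η))(w − w₀)² + (1/(2β)) w² + (1/α)|w| on ℝ attains a unique minimum at w* = S_γ(λ w₀ − ζ g), where S_γ is the soft-thresholding operator S_γ(z) = sign(z)·max{0, |z| − γ}. -/
/-- Componentwise form of the elastic-net memory update: for `g, w₀ ∈ ℝ` and
`η, β, α > 0`, with `γ = ηβ/(α(η+β))`, `λ = β/(β+η)`, `ζ = ηλ`, the function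
`w ↦ g(w − w₀) + (1/(2η))(w − w₀)² + (1/(2β))w² + (1/α)|w|` attains a unique
minimum at `w* = S_γ(λw₀ − ζg)`, where `S_γ(z) = sign(z)·max{0, |z| − γ}` is the
soft-thresholding operator. -/
theorem stmt_16 (g w₀ η β α : ℝ) (hη : 0 < η) (hβ : 0 < β) (hα : 0 < α)
    (γ lam ζ : ℝ)
    (hγ : γ = η * β / (α * (η + β)))
    (hlam : lam = β / (β + η))
    (hζ : ζ = η * lam)
    (wstar : ℝ)
    (hws : wstar = Real.sign (lam * w₀ - ζ * g) * max 0 (|lam * w₀ - ζ * g| - γ)) :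
    ∀ w : ℝ, w ≠ wstar →
      g * (wstar - w₀) + (1 / (2 * η)) * (wstar - w₀) ^ 2
          + (1 / (2 * β)) * wstar ^ 2 + (1 / α) * |wstar| <
        g * (w - w₀) + (1 / (2 * η)) * (w - w₀) ^ 2
          + (1 / (2 * β)) * w ^ 2 + (1 / α) * |w| := by
  intro w hw
  set z : ℝ := lam * w₀ - ζ * g with hz
  set A : ℝ := 1 / (2 * η) + 1 / (2 * β) with hA
  set B : ℝ := g - w₀ / η with hB
  set μ : ℝ := 1 / α with hμ
  have hηβ : 0 < η + β := by linarith
  have hApos : 0 < A := by positivity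
  have hμpos : 0 < μ := by positivity
  have hγpos : 0 < γ := by rw [hγ]; positivity
  have hzB : 2 * A * z = -B := by
    rw [hA, hB, hz, hlam, hζ, hlam]
    field_simp
    ring
  have hμγ : μ = 2 * A * γ := by
    rw [hμ, hA, hγ]
    field_simp
    ring
  clear_value z A B μ
  -- find a subgradient certificate
  obtain ⟨s, hs1, hs2, hs3⟩ :
      ∃ s : ℝ, |s| ≤ 1 ∧ s * wstar = |wstar| ∧ 2 * A * wstar + B + μ * s = 0 := by
    rcases le_or_gt |z| γ with hcase | hcase
    · refine ⟨z / γ, ?_, ?_, ?_⟩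
      · rw [abs_div, abs_of_pos hγpos]
        exact (div_le_one hγpos).mpr hcase
      · have hws0 : wstar = 0 := by
          rw [hws, max_eq_left (by linarith)]; ring
        simp [hws0]
      · have hws0 : wstar = 0 := by
          rw [hws, max_eq_left (by linarith)]; ring
        rw [hws0]
        have : μ * (z / γ) = 2 * A * z := by
          rw [hμγ]; field_simp
        rw [this, hzB]; ring
    · rcases lt_or_ge 0 z with hzpos | hzneg
      · have hsign : Real.sign z = 1 := Real.sign_of_pos hzpos
        have habs : |z| = z := abs_of_pos hzpos
        have hwsv : wstar = z - γ := by
          rw [hws, hsign, habs, max_eq_right (by rw [habs] at hcase; linarith)]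
          ring
        have hwspos : 0 < wstar := by rw [hwsv]; rw [habs] at hcase; linarith
        exact ⟨1, by norm_num, by rw [one_mul, abs_of_pos hwspos],
          by rw [hwsv, hμγ]; nlinarith [hzB]⟩
      · have hzneg' : z < 0 := by
          rcases lt_or_eq_of_le hzneg with h | h
          · exact h
          · exfalso; simp [h] at hcase; linarith
        have hsign : Real.sign z = -1 := Real.sign_of_neg hzneg'
        have habs : |z| = -z := abs_of_neg hzneg'
        have hwsv : wstar = z + γ := by
          rw [hws, hsign, habs, max_eq_right (by rw [habs] at hcase; linarith)]
          ring
        have hwsneg : wstar < 0 := by rw [hwsv]; rw [habs] at hcase; linarith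
        exact ⟨-1, by norm_num, by rw [abs_of_neg hwsneg]; ring,
          by rw [hwsv, hμγ]; nlinarith [hzB]⟩
  -- rewrite the objective
  have hF : ∀ v : ℝ,
      g * (v - w₀) + (1 / (2 * η)) * (v - w₀) ^ 2 + (1 / (2 * β)) * v ^ 2
        + μ * |v|
      = A * v ^ 2 + B * v + μ * |v| + (-(g * w₀) + w₀ ^ 2 / (2 * η)) := by
    intro v
    rw [hA, hB, hμ]
    field_simp
    ring
  have hsw : s * w ≤ |w| := by
    calc s * w ≤ |s * w| := le_abs_self _
    _ = |s| * |w| := abs_mul _ _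
    _ ≤ 1 * |w| := by exact mul_le_mul_of_nonneg_right hs1 (abs_nonneg _)
    _ = |w| := one_mul _
  have hsq : 0 < A * (w - wstar) ^ 2 := by
    have : w - wstar ≠ 0 := sub_ne_zero_of_ne hw
    positivity
  have key : μ * |w| - μ * |wstar| ≥ μ * s * (w - wstar) := by
    have h2 : μ * (s * wstar) = μ * |wstar| := by rw [hs2]
    have h3 : μ * (s * w) ≤ μ * |w| :=
      mul_le_mul_of_nonneg_left hsw (le_of_lt hμpos)
    linarith [h2, h3, sq_nonneg (w - wstar)]
  have hgoal : A * wstar ^ 2 + B * wstar + μ * |wstar| <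
      A * w ^ 2 + B * w + μ * |w| := by
    have h1 : A * w ^ 2 + B * w - (A * wstar ^ 2 + B * wstar)
        + μ * s * (w - wstar) = A * (w - wstar) ^ 2 := by
      linear_combination (w - wstar) * hs3
    linarith [key, hsq, h1]
  rw [hF wstar, hF w]
  linarith [hgoal]
end
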